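/- arXiv:1802.08406 — 3 statements merged into one kernel-verified Lean document; each statement's English description precedes it below -/
import Mathlib

section
/- Suppose y = A x*, η > 0, ψ(v) = ‖y − A v‖², and the projection inequality ‖x_{t+1} − (x_t + η Aᵀ(y − A x_t))‖² ≤ ‖x* − (x_t + η Aᵀ(y − A x_t))‖² holds. Then ψ(x_{t+1}) ≤ (1/η)‖x* − x_t‖² − ψ(x_t) − ((1/η)‖x_{t+1} − x_t‖² − ‖A(x_{t+1} − x_t)‖²). -/
open scoped InnerProductSpace

/-!
The gradient of `ψ` at `x_t` is `-2 Aᵀ r` with `r = y - A x_t`, and `A (x* - x_t) = r`. Expanding both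
squares in the projection inequality, the common term `‖η Aᵀ r‖²` cancels and, after dividing by `η`,
what remains is `(1/η)‖x_{t+1} - x_t‖² - 2⟪A (x_{t+1} - x_t), r⟫ ≤ (1/η)‖x* - x_t‖² - 2ψ(x_t)`.
Combined with the exact expansion `ψ(x_{t+1}) = ψ(x_t) - 2⟪A (x_{t+1} - x_t), r⟫ + ‖A (x_{t+1} - x_t)‖²`
this is the claim.
-/

section

variable {E F : Type*} [NormedAddCommGroup E] [InnerProductSpace ℝ E] [CompleteSpace E]
  [NormedAddCommGroup F] [InnerProductSpace ℝ F] [CompleteSpace F]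

omit [CompleteSpace E] in
theorem norm_sub_sq_le_norm_sub_sq_iff (u v w : E) :
    ‖u - w‖ ^ 2 ≤ ‖v - w‖ ^ 2 ↔ ‖u‖ ^ 2 - 2 * ⟪u, w⟫_ℝ ≤ ‖v‖ ^ 2 - 2 * ⟪v, w⟫_ℝ := by
  rw [norm_sub_sq_real, norm_sub_sq_real, add_le_add_iff_right]

theorem gradient_step_projection_bound (A : E →L[ℝ] F) {x x₁ xstar : E} {y : F}
    (hy : A xstar = y) {η : ℝ} (hη : 0 < η)
    (hproj : ‖x₁ - (x + η • (ContinuousLinearMap.adjoint A) (y - A x))‖ ^ 2 ≤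
      ‖xstar - (x + η • (ContinuousLinearMap.adjoint A) (y - A x))‖ ^ 2) :
    ‖x₁ - x‖ ^ 2 / η - 2 * ⟪A (x₁ - x), y - A x⟫_ℝ ≤
      ‖xstar - x‖ ^ 2 / η - 2 * ‖y - A x‖ ^ 2 := by
  have hresidual : A (xstar - x) = y - A x := by rw [map_sub, hy]
  rw [sub_add_eq_sub_sub, sub_add_eq_sub_sub, norm_sub_sq_le_norm_sub_sq_iff, real_inner_smul_right,
    real_inner_smul_right, ContinuousLinearMap.adjoint_inner_right,
    ContinuousLinearMap.adjoint_inner_right, hresidual, real_inner_self_eq_norm_sq] at hproj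
  calc ‖x₁ - x‖ ^ 2 / η - 2 * ⟪A (x₁ - x), y - A x⟫_ℝ
      = (‖x₁ - x‖ ^ 2 - 2 * (η * ⟪A (x₁ - x), y - A x⟫_ℝ)) / η := by field_simp
    _ ≤ (‖xstar - x‖ ^ 2 - 2 * (η * ‖y - A x‖ ^ 2)) / η := by gcongr
    _ = ‖xstar - x‖ ^ 2 / η - 2 * ‖y - A x‖ ^ 2 := by field_simp

end

theorem stmt_3 (m n : ℕ)
    (A : EuclideanSpace ℝ (Fin n) →L[ℝ] EuclideanSpace ℝ (Fin m))
    (xstar xt xt1 : EuclideanSpace ℝ (Fin n))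
    (y : EuclideanSpace ℝ (Fin m)) (hy : y = A xstar)
    (η : ℝ) (hη : 0 < η)
    (ψ : EuclideanSpace ℝ (Fin n) → ℝ)
    (hψ : ∀ v, ψ v = ‖y - A v‖ ^ 2)
    (hproj : ‖xt1 - (xt + η • (ContinuousLinearMap.adjoint A) (y - A xt))‖ ^ 2 ≤
      ‖xstar - (xt + η • (ContinuousLinearMap.adjoint A) (y - A xt))‖ ^ 2) :
    ψ xt1 ≤ (1 / η) * ‖xstar - xt‖ ^ 2 - ψ xt -
      ((1 / η) * ‖xt1 - xt‖ ^ 2 - ‖A (xt1 - xt)‖ ^ 2) := by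
  have hstep := gradient_step_projection_bound A hy.symm hη hproj
  have hψ_expand : ψ xt1 = ψ xt - 2 * ⟪A (xt1 - xt), y - A xt⟫_ℝ + ‖A (xt1 - xt)‖ ^ 2 := by
    rw [hψ, hψ, show y - A xt1 = (y - A xt) - A (xt1 - xt) by rw [map_sub]; abel,
      norm_sub_sq_real, real_inner_comm]
  rw [hψ_expand, hψ, one_div_mul_eq_div, one_div_mul_eq_div]
  linarith
end

section
/- Let S ⊆ R^n, A an m×n matrix satisfying S-REC(S, γ, 0) (i.e., ‖A(x₁−x₂)‖² ≥ γ‖x₁−x₂‖² for all x₁,x₂ ∈ S) and ‖Av‖ ≤ ρ‖v‖ for all v with ρ² ≤ γ. Fix x* ∈ S, y = A x*, and step size η with 1/(2γ) < η < 1/γ. If the sequence (x_t) in S satisfies the projection property ‖x_{t+1} − w_t‖ ≤ ‖x* − w_t‖ where w_t = x_t + η Aᵀ(y − A x_t), then ψ(x_{t+1}) ≤ α ψ(x_t) with α = 1/(ηγ) − 1 ∈ (0,1), where ψ(v) = ‖y − A v‖². -/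
/-!
Write `u = x_{t+1} - x_t` and `v = x* - x_t`, so that `y - A x_t = A v`. Squaring the projection
property and expanding, the common term `‖η Aᵀ A v‖²` cancels and leaves
`‖u‖² - 2η⟪Au, Av⟫ ≤ ‖v‖² - 2η‖Av‖²`. Since `ψ(x_{t+1}) = ‖Av - Au‖²` and `ψ(x_t) = ‖Av‖²`, the
lower bound `‖Av‖² ≥ γ‖v‖²` (S-REC, as `x*, x_t ∈ S`) and the upper bound `‖Au‖² ≤ ρ²‖u‖² ≤ γ‖u‖²`
turn this into `ηγ ψ(x_{t+1}) ≤ (1 - ηγ) ψ(x_t)`.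
-/

open scoped InnerProduct RealInnerProductSpace

lemma sq_norm_apply_le_of_norm_apply_le {E F : Type*} [Norm E] [SeminormedAddCommGroup F]
    {A : E → F} {ρ γ : ℝ}
    (hA : ∀ v, ‖A v‖ ≤ ρ * ‖v‖) (hργ : ρ ^ 2 ≤ γ) (v : E) :
    ‖A v‖ ^ 2 ≤ γ * ‖v‖ ^ 2 :=
  calc ‖A v‖ ^ 2 ≤ (ρ * ‖v‖) ^ 2 := pow_le_pow_left₀ (norm_nonneg _) (hA v) 2
    _ = ρ ^ 2 * ‖v‖ ^ 2 := mul_pow ρ ‖v‖ 2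
    _ ≤ γ * ‖v‖ ^ 2 := by gcongr

section ProjectedGradient

variable {E F : Type*} [NormedAddCommGroup E] [InnerProductSpace ℝ E] [CompleteSpace E]
  [NormedAddCommGroup F] [InnerProductSpace ℝ F] [CompleteSpace F]

lemma projected_gradient_step_inner_le (A : E →L[ℝ] F) (η : ℝ) {x x' xs : E}
    (hproj : ‖x' - (x + η • (A†) (A xs - A x))‖ ≤ ‖xs - (x + η • (A†) (A xs - A x))‖) :
    ‖x' - x‖ ^ 2 - 2 * η * ⟪A (x' - x), A (xs - x)⟫ ≤
      ‖xs - x‖ ^ 2 - 2 * η * ‖A (xs - x)‖ ^ 2 := by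
  set g := η • (A†) (A (xs - x))
  have hsq : ‖(x' - x) - g‖ ^ 2 ≤ ‖(xs - x) - g‖ ^ 2 := by
    rw [← map_sub] at hproj
    simpa only [g, sub_sub] using pow_le_pow_left₀ (norm_nonneg _) hproj 2
  have hinner : ∀ w, ⟪w, g⟫ = η * ⟪A w, A (xs - x)⟫ := fun w => by
    rw [real_inner_smul_right, ContinuousLinearMap.adjoint_inner_right]
  rw [norm_sub_sq_real (x' - x), norm_sub_sq_real (xs - x), hinner, hinner,
    real_inner_self_eq_norm_sq] at hsq
  linarith

lemma projected_gradient_residual_le (A : E →L[ℝ] F) {γ η : ℝ} (hγ : 0 < γ) (hη : 0 < η)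
    (hηγ : η * γ ≤ 1) {x x' xs : E}
    (hproj : ‖x' - (x + η • (A†) (A xs - A x))‖ ≤ ‖xs - (x + η • (A†) (A xs - A x))‖)
    (hlower : γ * ‖xs - x‖ ^ 2 ≤ ‖A (xs - x)‖ ^ 2)
    (hupper : ‖A (x' - x)‖ ^ 2 ≤ γ * ‖x' - x‖ ^ 2) :
    ‖A xs - A x'‖ ^ 2 ≤ (1 / (η * γ) - 1) * ‖A xs - A x‖ ^ 2 := by
  have hstep := projected_gradient_step_inner_le A η hproj
  have hres : ‖A xs - A x'‖ ^ 2 =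
      ‖A (xs - x)‖ ^ 2 - 2 * ⟪A (x' - x), A (xs - x)⟫ + ‖A (x' - x)‖ ^ 2 := by
    rw [real_inner_comm, ← norm_sub_sq_real, ← map_sub, ← map_sub, sub_sub_sub_cancel_right]
  have hηγ0 : 0 < η * γ := mul_pos hη hγ
  rw [hres, ← map_sub, sub_mul, one_div_mul_eq_div, le_sub_iff_add_le, le_div_iff₀ hηγ0]
  linarith [mul_le_mul_of_nonneg_left hstep hγ.le,
    mul_nonneg (sq_nonneg ‖A (x' - x)‖) (sub_nonneg.2 hηγ)]

end ProjectedGradient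

lemma one_div_mul_sub_one_pos_and_lt_one {γ η : ℝ} (hγ : 0 < γ) (hη1 : 1 / (2 * γ) < η)
    (hη2 : η < 1 / γ) : 0 < 1 / (η * γ) - 1 ∧ 1 / (η * γ) - 1 < 1 := by
  have hlt : η * γ < 1 := (lt_div_iff₀ hγ).mp hη2
  have hgt : 1 < 2 * (η * γ) := by
    linarith [(div_lt_iff₀ (by positivity : (0 : ℝ) < 2 * γ)).mp hη1]
  have hpos : 0 < η * γ := by linarith
  constructor
  · linarith [one_lt_one_div hpos hlt]
  · linarith [(div_lt_iff₀ hpos).mpr hgt]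

theorem stmt_8_general (m n : ℕ)
    (A : EuclideanSpace ℝ (Fin n) →L[ℝ] EuclideanSpace ℝ (Fin m))
    (S : Set (EuclideanSpace ℝ (Fin n))) (γ ρ η : ℝ)
    (hγ : 0 < γ)
    (hSREC : ∀ x1 ∈ S, ∀ x2 ∈ S, ‖A (x1 - x2)‖ ^ 2 ≥ γ * ‖x1 - x2‖ ^ 2)
    (hAρ : ∀ v : EuclideanSpace ℝ (Fin n), ‖A v‖ ≤ ρ * ‖v‖)
    (hργ : ρ ^ 2 ≤ γ)
    (xstar : EuclideanSpace ℝ (Fin n)) (hxs : xstar ∈ S)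
    (y : EuclideanSpace ℝ (Fin m)) (hy : y = A xstar)
    (hη1 : 1 / (2 * γ) < η) (hη2 : η < 1 / γ)
    (x : ℕ → EuclideanSpace ℝ (Fin n)) (hxS : ∀ t, x t ∈ S)
    (hproj : ∀ t,
      ‖x (t + 1) - (x t + η • (ContinuousLinearMap.adjoint A) (y - A (x t)))‖ ≤
      ‖xstar - (x t + η • (ContinuousLinearMap.adjoint A) (y - A (x t)))‖)
    (ψ : EuclideanSpace ℝ (Fin n) → ℝ)
    (hψ : ∀ v, ψ v = ‖y - A v‖ ^ 2) :
    (0 < 1 / (η * γ) - 1 ∧ 1 / (η * γ) - 1 < 1) ∧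
      ∀ t, ψ (x (t + 1)) ≤ (1 / (η * γ) - 1) * ψ (x t) := by
  subst hy
  have hη : 0 < η := lt_trans (by positivity) hη1
  have hηγ : η * γ ≤ 1 := ((lt_div_iff₀ hγ).mp hη2).le
  refine ⟨one_div_mul_sub_one_pos_and_lt_one hγ hη1 hη2, fun t => ?_⟩
  rw [hψ, hψ]
  exact projected_gradient_residual_le A hγ hη hηγ (hproj t)
    (hSREC xstar hxs (x t) (hxS t)) (sq_norm_apply_le_of_norm_apply_le hAρ hργ _)

theorem stmt_8 (m n : ℕ)
    (A : EuclideanSpace ℝ (Fin n) →L[ℝ] EuclideanSpace ℝ (Fin m))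
    (S : Set (EuclideanSpace ℝ (Fin n))) (γ ρ η : ℝ)
    (hγ : 0 < γ) (hρ : 0 ≤ ρ)
    (hSREC : ∀ x1 ∈ S, ∀ x2 ∈ S, ‖A (x1 - x2)‖ ^ 2 ≥ γ * ‖x1 - x2‖ ^ 2)
    (hAρ : ∀ v : EuclideanSpace ℝ (Fin n), ‖A v‖ ≤ ρ * ‖v‖)
    (hργ : ρ ^ 2 ≤ γ)
    (xstar : EuclideanSpace ℝ (Fin n)) (hxs : xstar ∈ S)
    (y : EuclideanSpace ℝ (Fin m)) (hy : y = A xstar)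
    (hη1 : 1 / (2 * γ) < η) (hη2 : η < 1 / γ)
    (x : ℕ → EuclideanSpace ℝ (Fin n)) (hxS : ∀ t, x t ∈ S)
    (hproj : ∀ t,
      ‖x (t + 1) - (x t + η • (ContinuousLinearMap.adjoint A) (y - A (x t)))‖ ≤
      ‖xstar - (x t + η • (ContinuousLinearMap.adjoint A) (y - A (x t)))‖)
    (ψ : EuclideanSpace ℝ (Fin n) → ℝ)
    (hψ : ∀ v, ψ v = ‖y - A v‖ ^ 2) :
    (0 < 1 / (η * γ) - 1 ∧ 1 / (η * γ) - 1 < 1) ∧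
      ∀ t, ψ (x (t + 1)) ≤ (1 / (η * γ) - 1) * ψ (x t) :=
  stmt_8_general m n A S γ ρ η hγ hSREC hAρ hργ xstar hxs y hy hη1 hη2 x hxS hproj ψ hψ
end

section
/- Under the hypotheses of the contraction lemma (S-REC(S, γ, 0), ‖Av‖ ≤ ρ‖v‖ with ρ² ≤ γ, 1/(2γ) < η < 1/γ, projection property with respect to x* ∈ S, all iterates in S), the sequence (x_t) converges to x*. -/
/-!
The error `e t = x t - x*` contracts by the factor `c = 2 (1 - η γ) ∈ [0, 1)`. The projection
property says `x (t+1) - x*` is at least as close to `v = e t - η Aᵀ A (e t)` as `0` is, which gives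
`‖e (t+1)‖² ≤ 2 ⟪e (t+1), v⟫`. Polarising `‖A (e (t+1) - e t)‖²`, the lower bound of S-REC on
`e t, e (t+1)` and the upper bound `ρ² ≤ γ` on their difference give `⟪A e (t+1), A e t⟫ ≥ γ ⟪e (t+1), e t⟫`,
hence `‖e (t+1)‖² ≤ c ⟪e (t+1), e t⟫ ≤ c ‖e (t+1)‖ ‖e t‖`.
-/

open Filter Topology ContinuousLinearMap InnerProductSpace

section

variable {E F : Type*} [NormedAddCommGroup E] [InnerProductSpace ℝ E]
  [NormedAddCommGroup F] [InnerProductSpace ℝ F]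

theorem sq_norm_le_two_mul_inner_of_norm_sub_le {w v : E} (h : ‖w - v‖ ≤ ‖v‖) :
    ‖w‖ ^ 2 ≤ 2 * ⟪w, v⟫_ℝ := by
  have h2 := pow_le_pow_left₀ (norm_nonneg _) h 2
  rw [norm_sub_sq_real] at h2
  linarith

theorem norm_le_mul_of_sq_norm_le_mul_inner {w u : E} {c : ℝ} (hc : 0 ≤ c)
    (h : ‖w‖ ^ 2 ≤ c * ⟪w, u⟫_ℝ) : ‖w‖ ≤ c * ‖u‖ := by
  have h' : ‖w‖ * ‖w‖ ≤ ‖w‖ * (c * ‖u‖) :=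
    calc ‖w‖ * ‖w‖ = ‖w‖ ^ 2 := by ring
      _ ≤ c * ⟪w, u⟫_ℝ := h
      _ ≤ c * (‖w‖ * ‖u‖) := mul_le_mul_of_nonneg_left (real_inner_le_norm w u) hc
      _ = ‖w‖ * (c * ‖u‖) := by ring
  rcases (norm_nonneg w).eq_or_lt with hw | hw
  · rw [← hw]
    positivity
  · exact le_of_mul_le_mul_left h' hw

theorem mul_inner_le_inner_apply (A : E →L[ℝ] F) {γ : ℝ} {w u : E}
    (hw : γ * ‖w‖ ^ 2 ≤ ‖A w‖ ^ 2) (hu : γ * ‖u‖ ^ 2 ≤ ‖A u‖ ^ 2)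
    (hwu : ‖A (w - u)‖ ^ 2 ≤ γ * ‖w - u‖ ^ 2) : γ * ⟪w, u⟫_ℝ ≤ ⟪A w, A u⟫_ℝ := by
  rw [map_sub, norm_sub_sq_real, norm_sub_sq_real] at hwu
  linarith

variable [CompleteSpace E] [CompleteSpace F]

noncomputable def gradientStep (A : E →L[ℝ] F) (y : F) (η : ℝ) (x : E) : E :=
  x + η • adjoint A (y - A x)

theorem gradientStep_apply_sub (A : E →L[ℝ] F) (η : ℝ) (x xs : E) :
    gradientStep A (A xs) η x - xs = (x - xs) - η • adjoint A (A (x - xs)) := by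
  rw [gradientStep, ← map_sub, ← neg_sub x xs, map_neg, map_neg, smul_neg]
  abel

theorem norm_sub_le_of_norm_sub_gradientStep_le (A : E →L[ℝ] F) (S : Set E) {γ η : ℝ}
    (hSREC : ∀ x1 ∈ S, ∀ x2 ∈ S, γ * ‖x1 - x2‖ ^ 2 ≤ ‖A (x1 - x2)‖ ^ 2)
    (hA : ∀ v, ‖A v‖ ^ 2 ≤ γ * ‖v‖ ^ 2) (hη : 0 ≤ η) (hηγ : η * γ ≤ 1)
    {xs x x' : E} (hxs : xs ∈ S) (hx : x ∈ S) (hx' : x' ∈ S)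
    (hproj : ‖x' - gradientStep A (A xs) η x‖ ≤ ‖xs - gradientStep A (A xs) η x‖) :
    ‖x' - xs‖ ≤ 2 * (1 - η * γ) * ‖x - xs‖ := by
  have hnear : ‖(x' - xs) - (gradientStep A (A xs) η x - xs)‖ ≤
      ‖gradientStep A (A xs) η x - xs‖ := by
    rwa [sub_sub_sub_cancel_right, norm_sub_rev _ xs]
  rw [gradientStep_apply_sub] at hnear
  set w := x' - xs
  set u := x - xs
  have hinner : γ * ⟪w, u⟫_ℝ ≤ ⟪A w, A u⟫_ℝ :=
    mul_inner_le_inner_apply A (hSREC x' hx' xs hxs) (hSREC x hx xs hxs) (hA (w - u))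
  have hsq := sq_norm_le_two_mul_inner_of_norm_sub_le hnear
  rw [inner_sub_right, real_inner_smul_right, adjoint_inner_right] at hsq
  refine norm_le_mul_of_sq_norm_le_mul_inner (by linarith) ?_
  nlinarith [mul_le_mul_of_nonneg_left hinner hη]

end

theorem tendsto_of_norm_sub_le_mul {E : Type*} [SeminormedAddCommGroup E] {x : ℕ → E} {a : E}
    {c : ℝ} (hc0 : 0 ≤ c) (hc1 : c < 1) (h : ∀ t, ‖x (t + 1) - a‖ ≤ c * ‖x t - a‖) :
    Tendsto x atTop (𝓝 a) := by
  rw [tendsto_iff_norm_sub_tendsto_zero]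
  have hgeom : Tendsto (fun t ↦ c ^ t * ‖x 0 - a‖) atTop (𝓝 0) := by
    simpa using (tendsto_pow_atTop_nhds_zero_of_lt_one hc0 hc1).mul_const ‖x 0 - a‖
  exact squeeze_zero (fun t ↦ norm_nonneg _)
    (fun t ↦ le_geom (u := fun t ↦ ‖x t - a‖) hc0 t fun k _ ↦ h k) hgeom

theorem stmt_10_general (m n : ℕ)
    (A : EuclideanSpace ℝ (Fin n) →L[ℝ] EuclideanSpace ℝ (Fin m))
    (S : Set (EuclideanSpace ℝ (Fin n))) (γ ρ η : ℝ)
    (hγ : 0 < γ)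
    (hSREC : ∀ x1 ∈ S, ∀ x2 ∈ S, ‖A (x1 - x2)‖ ^ 2 ≥ γ * ‖x1 - x2‖ ^ 2)
    (hAρ : ∀ v : EuclideanSpace ℝ (Fin n), ‖A v‖ ≤ ρ * ‖v‖)
    (hργ : ρ ^ 2 ≤ γ)
    (xstar : EuclideanSpace ℝ (Fin n)) (hxs : xstar ∈ S)
    (y : EuclideanSpace ℝ (Fin m)) (hy : y = A xstar)
    (hη1 : 1 / (2 * γ) < η) (hη2 : η < 1 / γ)
    (x : ℕ → EuclideanSpace ℝ (Fin n)) (hxS : ∀ t, x t ∈ S)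
    (hproj : ∀ t,
      ‖x (t + 1) - (x t + η • (ContinuousLinearMap.adjoint A) (y - A (x t)))‖ ≤
      ‖xstar - (x t + η • (ContinuousLinearMap.adjoint A) (y - A (x t)))‖) :
    Filter.Tendsto x Filter.atTop (nhds xstar) := by
  subst hy
  have hη0 : 0 < η := lt_trans (by positivity) hη1
  have hηγ1 : η * γ < 1 := by rwa [lt_div_iff₀ hγ] at hη2
  have hηγ2 : 1 / 2 < η * γ := by
    rw [div_lt_iff₀ (by positivity)] at hη1
    linarith
  have hA : ∀ v, ‖A v‖ ^ 2 ≤ γ * ‖v‖ ^ 2 := fun v ↦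
    calc ‖A v‖ ^ 2 ≤ (ρ * ‖v‖) ^ 2 := pow_le_pow_left₀ (norm_nonneg _) (hAρ v) 2
      _ = ρ ^ 2 * ‖v‖ ^ 2 := by ring
      _ ≤ γ * ‖v‖ ^ 2 := mul_le_mul_of_nonneg_right hργ (by positivity)
  refine tendsto_of_norm_sub_le_mul (c := 2 * (1 - η * γ)) (by linarith) (by linarith) fun t ↦ ?_
  exact norm_sub_le_of_norm_sub_gradientStep_le A S hSREC hA hη0.le hηγ1.le hxs (hxS t)
    (hxS (t + 1)) (hproj t)

theorem stmt_10 (m n : ℕ)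
    (A : EuclideanSpace ℝ (Fin n) →L[ℝ] EuclideanSpace ℝ (Fin m))
    (S : Set (EuclideanSpace ℝ (Fin n))) (γ ρ η : ℝ)
    (hγ : 0 < γ) (hρ : 0 ≤ ρ)
    (hSREC : ∀ x1 ∈ S, ∀ x2 ∈ S, ‖A (x1 - x2)‖ ^ 2 ≥ γ * ‖x1 - x2‖ ^ 2)
    (hAρ : ∀ v : EuclideanSpace ℝ (Fin n), ‖A v‖ ≤ ρ * ‖v‖)
    (hργ : ρ ^ 2 ≤ γ)
    (xstar : EuclideanSpace ℝ (Fin n)) (hxs : xstar ∈ S)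
    (y : EuclideanSpace ℝ (Fin m)) (hy : y = A xstar)
    (hη1 : 1 / (2 * γ) < η) (hη2 : η < 1 / γ)
    (x : ℕ → EuclideanSpace ℝ (Fin n)) (hxS : ∀ t, x t ∈ S)
    (hproj : ∀ t,
      ‖x (t + 1) - (x t + η • (ContinuousLinearMap.adjoint A) (y - A (x t)))‖ ≤
      ‖xstar - (x t + η • (ContinuousLinearMap.adjoint A) (y - A (x t)))‖) :
    Filter.Tendsto x Filter.atTop (nhds xstar) :=
  stmt_10_general m n A S γ ρ η hγ hSREC hAρ hργ xstar hxs y hy hη1 hη2 x hxS hproj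
end
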